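/- The image of ℂ⁴ under the map φ = (φ₀ : φ₁ : … : φ₅) lies on the degree-8 hypersurface F₈ = 0 in ℙ⁵: for every a ∈ ℂ, substituting z₀ = 1, z₁ = φ₁, z₂ = φ₂, z₃ = φ₃, z₄ = φ₄, z₅ = φ₅ into F₈ gives the zero polynomial in ℂ[q,Q,p,P]. -/
import Mathlib


/-- The embedding polynomials φ₀,…,φ₅ of the DGR system with deformation
parameter a. -/
noncomputable def φ₀ (a q Q p P : ℂ) : ℂ := 1
noncomputable def φ₁ (a q Q p P : ℂ) : ℂ := Q
noncomputable def φ₂ (a q Q p P : ℂ) : ℂ :=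
  Q * p + (2/3 : ℂ) * q * P + (1/3 : ℂ) * Q * P
noncomputable def φ₃ (a q Q p P : ℂ) : ℂ :=
  (9/2 : ℂ) * q * Q ^ 2 - (9/2 : ℂ) * Q ^ 3 + P ^ 2
noncomputable def φ₄ (a q Q p P : ℂ) : ℂ :=
  q ^ 2 * Q ^ 2 - (1/2 : ℂ) * q * Q ^ 3 - (1/2 : ℂ) * Q ^ 4 - (2/3 : ℂ) * Q * p * P
    - (2/9 : ℂ) * q * P ^ 2 - (1/9 : ℂ) * Q * P ^ 2 + a * Q ^ 2
noncomputable def φ₅ (a q Q p P : ℂ) : ℂ :=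
  (3/2 : ℂ) * q * Q ^ 2 * p + 2 * q ^ 2 * Q * P + (1/2 : ℂ) * q * Q ^ 2 * P
    - Q ^ 3 * P - (1/3 : ℂ) * p * P ^ 2 + (1/9 : ℂ) * P ^ 3 + a * Q * P

/-- The degree-8 polynomial F₈ defining the hypersurface X ⊂ ℙ⁵. -/
noncomputable def F₈ (a z₀ z₁ z₂ z₃ z₄ z₅ : ℂ) : ℂ :=
  (-81 * a) * z₁^6 * z₃^2 + 162 * z₀ * z₁^3 * z₂^2 * z₃^2 - 27 * z₁^5 * z₃^3
    + 36 * z₀^3 * z₂^2 * z₃^3 - 4 * z₀^2 * z₁^2 * z₃^4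
    - 6561 * z₁^5 * z₂^2 * z₄
    + (-1458 * a) * z₀ * z₁^5 * z₃ * z₄ - 1458 * z₀^2 * z₁^2 * z₂^2 * z₃ * z₄
    - 405 * z₀ * z₁^4 * z₃^2 * z₄ - 72 * z₀^3 * z₁ * z₃^3 * z₄
    + (-6561 * a) * z₀^2 * z₁^4 * z₄^2 - 729 * z₀^2 * z₁^3 * z₃ * z₄^2
    - 324 * z₀^4 * z₃^2 * z₄^2 + 6561 * z₀^3 * z₁^2 * z₄^3
    - 486 * z₀ * z₁^4 * z₂ * z₃ * z₅ - 216 * z₀^3 * z₁ * z₂ * z₃^2 * z₅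
    + 4374 * z₀^2 * z₁^3 * z₂ * z₄ * z₅ + 324 * z₀^3 * z₁^2 * z₃ * z₅^2

/-- the image of ℂ⁴ under φ = (φ₀ : … : φ₅) lies on the degree-8
hypersurface F₈ = 0 in ℙ⁵. -/
theorem image_on_hypersurface (a q Q p P : ℂ) :
    F₈ a 1 (φ₁ a q Q p P) (φ₂ a q Q p P) (φ₃ a q Q p P)
      (φ₄ a q Q p P) (φ₅ a q Q p P) = 0 := by
  simp only [φ₁, φ₂, φ₃, φ₄, φ₅, F₈]; ring
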